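/- Let T1 and T2 be non-repeating binary decision trees over the same finite feature set F and class set C, and suppose T1 and T2 are equivalent (T1(x) = T2(x) for every input x : F → Bool). Then every pair of compatible rules (π1 of T1, π2 of T2) is consistent, i.e., their classes are equal; consequently the degree of equivalence of T1 with respect to T2 equals 1. -/

import Mathlib

/-- A binary decision tree over features `F` and classes `C`. -/
inductive DTree (F : Type) (C : Type) where
  | leaf (c : C) : DTree F C
  | node (f : F) (t0 t1 : DTree F C) : DTree F C

namespace DTree

variable {F C : Type}

/-- Evaluation of a tree on an input `x : F → Bool`. -/
def eval : DTree F C → (F → Bool) → C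
  | leaf c, _ => c
  | node f t0 t1, x => if x f then t1.eval x else t0.eval x

/-- The rules (root-to-leaf paths with their leaf class) of a tree. -/
def rules : DTree F C → List (List (F × Bool) × C)
  | leaf c => [([], c)]
  | node f t0 t1 =>
      (t0.rules.map fun r => ((f, false) :: r.1, r.2)) ++
      (t1.rules.map fun r => ((f, true) :: r.1, r.2))

/-- The root-to-leaf path followed when evaluating the tree on input `x`. -/
def path : DTree F C → (F → Bool) → List (F × Bool)
  | leaf _, _ => []
  | node f t0 t1, x => (f, x f) :: (if x f then t1.path x else t0.path x)

/-- A tree is non-repeating if no feature occurs more than once along any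
root-to-leaf path. -/
def NonRepeating (T : DTree F C) : Prop :=
  ∀ π ∈ T.rules, (π.1.map Prod.fst).Nodup

end DTree

/-- An input `x` triggers a rule `π` if `x f = v` for every pair `(f, v)` on `π`. -/
def Triggers {F C : Type} (x : F → Bool) (π : List (F × Bool) × C) : Prop :=
  ∀ p ∈ π.1, x p.1 = p.2

/-!
An input that triggers a rule follows that rule's path, so the tree returns the rule's class
on it. Compatible rules of equivalent trees share such an input `x`, hence both carry the
class `T1.eval x = T2.eval x`. Thus the consistent rules of `T1` are exactly its compatible
ones, and there is at least one of them because every input triggers some rule of each tree.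
-/

theorem triggers_cons_iff {F C : Type} (x : F → Bool) (p : F × Bool) (l : List (F × Bool))
    (c : C) : Triggers x (p :: l, c) ↔ x p.1 = p.2 ∧ Triggers x (l, c) :=
  List.forall_mem_cons

namespace DTree

variable {F C : Type}

theorem eval_eq_of_triggers (T : DTree F C) {π : List (F × Bool) × C} (hπ : π ∈ T.rules)
    {x : F → Bool} (hx : Triggers x π) : T.eval x = π.2 := by
  induction T generalizing π with
  | leaf c =>
    rw [rules, List.mem_singleton] at hπ
    subst hπ
    rfl
  | node f t0 t1 ih0 ih1 =>
    simp only [rules, List.mem_append, List.mem_map] at hπ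
    rcases hπ with ⟨r, hr, rfl⟩ | ⟨r, hr, rfl⟩
    · obtain ⟨hf, hxr⟩ := (triggers_cons_iff x _ r.1 r.2).1 hx
      simpa [eval, hf] using ih0 hr hxr
    · obtain ⟨hf, hxr⟩ := (triggers_cons_iff x _ r.1 r.2).1 hx
      simpa [eval, hf] using ih1 hr hxr

theorem exists_mem_rules_triggers (T : DTree F C) (x : F → Bool) :
    ∃ π ∈ T.rules, Triggers x π := by
  induction T with
  | leaf c => exact ⟨([], c), List.mem_singleton_self _, nofun⟩
  | node f t0 t1 ih0 ih1 =>
    cases hf : x f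
    · obtain ⟨r, hr, hxr⟩ := ih0
      refine ⟨((f, false) :: r.1, r.2), ?_, (triggers_cons_iff x _ r.1 r.2).2 ⟨hf, hxr⟩⟩
      exact List.mem_append_left _ (List.mem_map_of_mem hr)
    · obtain ⟨r, hr, hxr⟩ := ih1
      refine ⟨((f, true) :: r.1, r.2), ?_, (triggers_cons_iff x _ r.1 r.2).2 ⟨hf, hxr⟩⟩
      exact List.mem_append_right _ (List.mem_map_of_mem hr)

theorem class_eq_of_compatible {T1 T2 : DTree F C} (heq : ∀ x, T1.eval x = T2.eval x)
    {π1 π2 : List (F × Bool) × C} (h1 : π1 ∈ T1.rules) (h2 : π2 ∈ T2.rules)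
    (hcompat : ∃ x, Triggers x π1 ∧ Triggers x π2) : π1.2 = π2.2 := by
  obtain ⟨x, hx1, hx2⟩ := hcompat
  rw [← T1.eval_eq_of_triggers h1 hx1, heq, T2.eval_eq_of_triggers h2 hx2]

theorem exists_compatible_rules (T1 T2 : DTree F C) :
    ∃ π1 ∈ T1.rules, ∃ π2 ∈ T2.rules, ∃ x, Triggers x π1 ∧ Triggers x π2 := by
  obtain ⟨π1, h1, hx1⟩ := T1.exists_mem_rules_triggers (fun _ => true)
  obtain ⟨π2, h2, hx2⟩ := T2.exists_mem_rules_triggers (fun _ => true)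
  exact ⟨π1, h1, π2, h2, _, hx1, hx2⟩

end DTree

theorem List.card_subtype_mem_and_ne_zero {α : Type} {l : List α} {P : α → Prop}
    (h : ∃ a ∈ l, P a) : Nat.card {a // a ∈ l ∧ P a} ≠ 0 := by
  have : Finite {a // a ∈ l ∧ P a} := (l.finite_toSet.subset fun _ ha => ha.1).to_subtype
  obtain ⟨a, ha, hPa⟩ := h
  have : Nonempty {a // a ∈ l ∧ P a} := ⟨⟨a, ha, hPa⟩⟩
  exact Nat.card_pos.ne'

theorem doe_eq_one_of_equivalent_general (F C : Type)
    (T1 T2 : DTree F C)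
    (heq : ∀ x : F → Bool, T1.eval x = T2.eval x) :
    (∀ π1 ∈ T1.rules, ∀ π2 ∈ T2.rules,
        (∃ x : F → Bool, Triggers x π1 ∧ Triggers x π2) → π1.2 = π2.2) ∧
    ((Nat.card {π : List (F × Bool) × C // π ∈ T1.rules ∧ ∃ π2 ∈ T2.rules,
        (∃ x : F → Bool, Triggers x π ∧ Triggers x π2) ∧ π.2 = π2.2} : ℚ) /
      (Nat.card {π : List (F × Bool) × C // π ∈ T1.rules ∧ ∃ π2 ∈ T2.rules,
        ∃ x : F → Bool, Triggers x π ∧ Triggers x π2} : ℚ)) = 1 := by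
  have hcons : ∀ π1 ∈ T1.rules, ∀ π2 ∈ T2.rules,
      (∃ x : F → Bool, Triggers x π1 ∧ Triggers x π2) → π1.2 = π2.2 :=
    fun _ h1 _ h2 => DTree.class_eq_of_compatible heq h1 h2
  refine ⟨hcons, ?_⟩
  rw [Nat.card_congr (Equiv.subtypeEquivRight fun π =>
    and_congr_right fun h1 => exists_congr fun π2 => and_congr_right fun h2 =>
      and_iff_left_of_imp (hcons π h1 π2 h2))]
  obtain ⟨π1, h1, hcompat⟩ := DTree.exists_compatible_rules T1 T2
  exact div_self (Nat.cast_ne_zero.2 (List.card_subtype_mem_and_ne_zero ⟨π1, h1, hcompat⟩))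

/-- if two non-repeating trees are equivalent, then every compatible pair
of rules is consistent (their classes agree), and the degree of equivalence equals 1. -/
theorem doe_eq_one_of_equivalent (F C : Type) [Fintype F]
    (T1 T2 : DTree F C) (hT1 : T1.NonRepeating) (hT2 : T2.NonRepeating)
    (heq : ∀ x : F → Bool, T1.eval x = T2.eval x) :
    (∀ π1 ∈ T1.rules, ∀ π2 ∈ T2.rules,
        (∃ x : F → Bool, Triggers x π1 ∧ Triggers x π2) → π1.2 = π2.2) ∧
    ((Nat.card {π : List (F × Bool) × C // π ∈ T1.rules ∧ ∃ π2 ∈ T2.rules,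
        (∃ x : F → Bool, Triggers x π ∧ Triggers x π2) ∧ π.2 = π2.2} : ℚ) /
      (Nat.card {π : List (F × Bool) × C // π ∈ T1.rules ∧ ∃ π2 ∈ T2.rules,
        ∃ x : F → Bool, Triggers x π ∧ Triggers x π2} : ℚ)) = 1 :=
  doe_eq_one_of_equivalent_general F C T1 T2 heq
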